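/- Let p be a prime and G a finite potent p-group. Then for every k ≥ 1: if p = 2, γ_{k+1}(G) ≤ γ_k(G)^4, and if p ≥ 3, γ_{p-1+k}(G) ≤ γ_{k+1}(G)^p. -/

import Mathlib

/-- Commutator `[x, y] = x⁻¹ * y⁻¹ * x * y`. -/
def comm' {G : Type*} [Group G] (x y : G) : G := x⁻¹ * y⁻¹ * x * y

/-- `spow H n` is the subgroup `H^n` generated by all `n`-th powers of elements of `H`. -/
def spow {G : Type*} [Group G] (H : Subgroup G) (n : ℕ) : Subgroup G :=
  Subgroup.closure {x | ∃ h ∈ H, x = h ^ n}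

/-- A finite `p`-group `G` is potent if `γ_{p-1}(G) ≤ G^p` for odd `p`,
or `G' ≤ G^4` for `p = 2`.  (Here `γ_k(G)` is `lowerCentralSeries G (k-1)`.) -/
def IsPotent (p : ℕ) (G : Type*) [Group G] : Prop :=
  if p = 2 then (⊤ : Subgroup G).lowerCentralSeries 1 ≤ spow (⊤ : Subgroup G) 4
  else (⊤ : Subgroup G).lowerCentralSeries (p - 2) ≤ spow (⊤ : Subgroup G) p

/-!
For a normal subgroup `N` of a finite `p`-group `G`, put `q = p` (odd `p`) or `q = 4` (`p = 2`) and
assume `[N, G, …, G] ≤ N^q` (with `p - 2`, resp. one, copy of `G`). Then `[N^q, G] ≤ [N, G]^q`;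
applied to `N = γ_k(G)`, this is the induction step along the lower central series, and potency is
the base case.

The claim is proved by induction on `|G|`. Working modulo `[N, G]^q` and, once that is trivial,
modulo a central subgroup `Z` of order `p`, one reduces to the case where `[N, G]` has exponent `q`
and `[N^q, G] ≤ Z`. Conjugating `y ∈ N` gives `(y^q)^w = ([w, y] y)^q`, so it suffices to show
`(c y)^q = y^q` for `c ∈ [N, G]`. For `p = 2` this is a direct computation in a group of class two.
For odd `p`, the subgroup `⟨c, y⟩` has class less than `p` and derived subgroup of exponent `p`,
so `(c y)^p = c^p y^p` by the Hall–Petrescu formula. Here that formula comes from a Taylor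
expansion `g n = ∏ uₑ ^ (n choose e)` with `uₑ ∈ γₑ` of the polynomial sequence
`g n = (ab)^{-n} aⁿ bⁿ`.
-/

open Subgroup
open scoped commutatorElement

section LowerCentralSeries

variable {G G' : Type*} [Group G] [Group G']

theorem Subgroup.commutator_commutator_le_of_rotate {H₁ H₂ H₃ K : Subgroup G} [K.Normal]
    (h₁ : ⁅⁅H₂, H₃⁆, H₁⁆ ≤ K) (h₂ : ⁅⁅H₃, H₁⁆, H₂⁆ ≤ K) : ⁅⁅H₁, H₂⁆, H₃⁆ ≤ K := by
  have key : ∀ X : Subgroup G, X ≤ K ↔ X.map (QuotientGroup.mk' K) = ⊥ := fun X => by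
    rw [Subgroup.map_eq_bot_iff, QuotientGroup.ker_mk']
  simp only [key, map_commutator] at h₁ h₂ ⊢
  exact commutator_commutator_eq_bot_of_rotate h₁ h₂

theorem Subgroup.commutator_lowerCentralSeries_le (a b : ℕ) :
    ⁅(⊤ : Subgroup G).lowerCentralSeries a, (⊤ : Subgroup G).lowerCentralSeries b⁆ ≤
      (⊤ : Subgroup G).lowerCentralSeries (a + b + 1) := by
  induction a generalizing b with
  | zero =>
    rw [lowerCentralSeries_zero, commutator_comm, zero_add, ← lowerCentralSeries_succ]
  | succ a ih =>
    rw [lowerCentralSeries_succ]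
    apply commutator_commutator_le_of_rotate
    · rw [commutator_comm ⊤, ← lowerCentralSeries_succ, commutator_comm]
      exact (ih (b + 1)).trans ((⊤ : Subgroup G).lowerCentralSeries_antitone (by omega))
    · rw [commutator_comm _ (lowerCentralSeries _ a)]
      refine (commutator_mono (ih b) le_rfl).trans ?_
      rw [← lowerCentralSeries_succ]
      exact (⊤ : Subgroup G).lowerCentralSeries_antitone (by omega)

def iterComm (N : Subgroup G) : ℕ → Subgroup G
  | 0 => N
  | k + 1 => ⁅iterComm N k, ⊤⁆

instance iterComm_normal (N : Subgroup G) [N.Normal] (k : ℕ) : (iterComm N k).Normal := by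
  induction k with
  | zero => assumption
  | succ k _ => rw [iterComm]; infer_instance

theorem map_iterComm {f : G →* G'} (hf : Function.Surjective f) (N : Subgroup G) (k : ℕ) :
    (iterComm N k).map f = iterComm (N.map f) k := by
  induction k with
  | zero => rfl
  | succ k ih => rw [iterComm, iterComm, map_commutator, ih, map_top_of_surjective f hf]

theorem iterComm_lowerCentralSeries (j k : ℕ) :
    iterComm ((⊤ : Subgroup G).lowerCentralSeries j) k =
      (⊤ : Subgroup G).lowerCentralSeries (j + k) := by
  induction k with
  | zero => rfl
  | succ k ih => rw [iterComm, ih]; rfl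

end LowerCentralSeries

section Powers

variable {G G' : Type*} [Group G] [Group G']

theorem pow_mem_spow {H : Subgroup G} {x : G} (hx : x ∈ H) (n : ℕ) : x ^ n ∈ spow H n :=
  subset_closure ⟨x, hx, rfl⟩

theorem pow_eq_one_of_spow_eq_bot {H : Subgroup G} {n : ℕ} (h : spow H n = ⊥) {x : G}
    (hx : x ∈ H) : x ^ n = 1 := by
  simpa [h] using pow_mem_spow hx n

theorem spow_mono {H K : Subgroup G} (h : H ≤ K) (n : ℕ) : spow H n ≤ spow K n :=
  closure_mono fun _ ⟨x, hx, hx'⟩ => ⟨x, h hx, hx'⟩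

theorem map_spow (f : G →* G') (H : Subgroup G) (n : ℕ) :
    (spow H n).map f = spow (H.map f) n := by
  rw [spow, spow, MonoidHom.map_closure]
  congr 1
  ext x
  constructor
  · rintro ⟨_, ⟨y, hy, rfl⟩, rfl⟩
    exact ⟨f y, mem_map_of_mem f hy, map_pow f y n⟩
  · rintro ⟨_, ⟨y, hy, rfl⟩, rfl⟩
    exact ⟨y ^ n, ⟨y, hy, rfl⟩, map_pow f y n⟩

instance spow_normal (H : Subgroup G) [hH : H.Normal] (n : ℕ) : (spow H n).Normal where
  conj_mem x hx g := by
    have hle : (spow H n).map (MulAut.conj g).toMonoidHom ≤ spow H n := by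
      rw [map_spow]
      exact spow_mono (by rintro _ ⟨h, hh, rfl⟩; exact hH.conj_mem h hh g) n
    exact hle ⟨x, hx, rfl⟩

theorem spow_le_center_of_mul_pow_eq {N : Subgroup G} {q : ℕ}
    (h : ∀ c ∈ ⁅N, (⊤ : Subgroup G)⁆, ∀ y ∈ N, (c * y) ^ q = y ^ q) : spow N q ≤ center G := by
  rw [spow, closure_le]
  rintro _ ⟨y, hy, rfl⟩
  rw [SetLike.mem_coe, mem_center_iff]
  intro w
  have hwy : w * y * w⁻¹ = ⁅w, y⁆ * y := by rw [commutatorElement_def]; group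
  have hc : ⁅w, y⁆ ∈ ⁅N, (⊤ : Subgroup G)⁆ :=
    commutator_comm N ⊤ ▸ commutator_mem_commutator (mem_top w) hy
  calc w * y ^ q = (w * y * w⁻¹) ^ q * w := by rw [conj_pow]; group
    _ = y ^ q * w := by rw [hwy, h _ hc y hy]

end Powers

/-- `gamma H j = γ_j(H)`, numbered from `γ_1(H) = H`; truncated subtraction also makes
`γ_0(H) = H`, the weight of an arbitrary element. -/
def gamma (H : Type*) [Group H] (j : ℕ) : Subgroup H :=
  (⊤ : Subgroup H).lowerCentralSeries (j - 1)

section Gamma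

variable {H H' : Type*} [Group H] [Group H']

instance gamma_normal (j : ℕ) : (gamma H j).Normal :=
  lowerCentralSeries_normal ⊤ (j - 1)

theorem gamma_antitone : Antitone (gamma H) := fun _ _ h =>
  (⊤ : Subgroup H).lowerCentralSeries_antitone (Nat.sub_le_sub_right h 1)

theorem comm'_mem_gamma {a b : ℕ} {x y : H} (hx : x ∈ gamma H a) (hy : y ∈ gamma H b) :
    comm' x y ∈ gamma H (a + b) := by
  have h : comm' x y = ⁅x⁻¹, y⁻¹⁆ := by simp only [comm', commutatorElement_def, inv_inv]
  rw [h]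
  exact (⊤ : Subgroup H).lowerCentralSeries_antitone (by omega)
    (commutator_lowerCentralSeries_le _ _ (commutator_mem_commutator (inv_mem hx) (inv_mem hy)))

theorem map_mem_gamma (f : H →* H') {j : ℕ} {x : H} (hx : x ∈ gamma H j) :
    f x ∈ gamma H' j := by
  have h := mem_map_of_mem f hx
  rw [gamma, map_lowerCentralSeries] at h
  exact lowerCentralSeries_mono _ le_top h

theorem map_gamma {f : H →* H'} (hf : Function.Surjective f) (j : ℕ) :
    (gamma H j).map f = gamma H' j := by
  rw [gamma, gamma, map_lowerCentralSeries, map_top_of_surjective f hf]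

end Gamma

section PolynomialSequences

variable {H H' : Type*} [Group H] [Group H']

def mulDiff (g : ℕ → H) : ℕ → H := fun n => (g n)⁻¹ * g (n + 1)

theorem mulDiff_mul (g h : ℕ → H) :
    mulDiff (g * h) = mulDiff g * comm' (mulDiff g) h * mulDiff h := by
  funext n
  simp only [mulDiff, comm', Pi.mul_apply, Pi.inv_apply]
  group

theorem mulDiff_inv (g : ℕ → H) : mulDiff g⁻¹ = (mulDiff g)⁻¹ * comm' (mulDiff g)⁻¹ g⁻¹ := by
  funext n
  simp only [mulDiff, comm', Pi.mul_apply, Pi.inv_apply]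
  group

theorem mulDiff_comm' (g h : ℕ → H) :
    mulDiff (comm' g h) =
      comm' g (mulDiff h) * comm' (comm' g (mulDiff h)) (mulDiff g * comm' g h) *
        comm' (comm' g h) (mulDiff h * mulDiff g) * comm' (mulDiff g) (h * mulDiff h) := by
  funext n
  simp only [mulDiff, comm', Pi.mul_apply, Pi.inv_apply]
  group

theorem mulDiff_comp (f : H →* H') (g : ℕ → H) : mulDiff (f ∘ g) = f ∘ mulDiff g := by
  funext n
  simp [mulDiff]

theorem iterate_mulDiff_comp (f : H →* H') (k : ℕ) (g : ℕ → H) :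
    mulDiff^[k] (f ∘ g) = f ∘ mulDiff^[k] g :=
  (Function.Semiconj.iterate_right (f := (f ∘ ·)) (fun g => (mulDiff_comp f g).symm) k g).symm

/-- `g ∈ polyTrunc j i` iff `mulDiff^[k] g` takes values in `gamma H (j + k)` for all `k ≤ i`. -/
def polyTrunc : ℕ → ℕ → Set (ℕ → H)
  | j, 0 => {g | ∀ n, g n ∈ gamma H j}
  | j, i + 1 => {g | (∀ n, g n ∈ gamma H j) ∧ mulDiff g ∈ polyTrunc (j + 1) i}

namespace polyTrunc

variable {i j j' : ℕ} {g : ℕ → H}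

theorem apply_mem (hg : g ∈ polyTrunc j i) (n : ℕ) : g n ∈ gamma H j := by
  cases i with
  | zero => exact hg n
  | succ i => exact hg.1 n

theorem anti (h : j ≤ j') (hg : g ∈ polyTrunc j' i) : g ∈ polyTrunc j i := by
  induction i generalizing j j' g with
  | zero => exact fun n => gamma_antitone h (hg n)
  | succ i ih => exact ⟨fun n => gamma_antitone h (hg.1 n), ih (by omega) hg.2⟩

theorem of_succ (hg : g ∈ polyTrunc j (i + 1)) : g ∈ polyTrunc j i := by
  induction i generalizing j g with
  | zero => exact hg.1
  | succ i ih => exact ⟨hg.1, ih hg.2⟩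

theorem one_mem : (1 : ℕ → H) ∈ polyTrunc j i := by
  induction i generalizing j with
  | zero => exact fun n => Subgroup.one_mem _
  | succ i ih =>
    refine ⟨fun n => Subgroup.one_mem _, ?_⟩
    have h : mulDiff (1 : ℕ → H) = 1 := by funext n; simp [mulDiff]
    rw [h]
    exact ih

theorem comp (f : H →* H') (hg : g ∈ polyTrunc j i) : f ∘ g ∈ polyTrunc j i := by
  induction i generalizing j g with
  | zero => exact fun n => map_mem_gamma f (hg n)
  | succ i ih => exact ⟨fun n => map_mem_gamma f (hg.1 n), (mulDiff_comp f g).symm ▸ ih hg.2⟩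

end polyTrunc

/-- Bundled because each closure property at level `i + 1` needs the others at level `i`. -/
def PolyTruncClosed (H : Type*) [Group H] (i : ℕ) : Prop :=
  (∀ {a : ℕ} {g h : ℕ → H}, g ∈ polyTrunc a i → h ∈ polyTrunc a i → g * h ∈ polyTrunc a i) ∧
  (∀ {a b c : ℕ} {g h : ℕ → H}, c ≤ a + b → g ∈ polyTrunc a i → h ∈ polyTrunc b i →
    comm' g h ∈ polyTrunc c i) ∧
  (∀ {a : ℕ} {g : ℕ → H}, g ∈ polyTrunc a i → g⁻¹ ∈ polyTrunc a i)

theorem polyTruncClosed_zero : PolyTruncClosed H 0 :=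
  ⟨fun hg hh n => mul_mem (hg n) (hh n),
    fun hc hg hh n => gamma_antitone hc (comm'_mem_gamma (hg n) (hh n)),
    fun hg n => inv_mem (hg n)⟩

theorem PolyTruncClosed.succ {i : ℕ} (h : PolyTruncClosed H i) : PolyTruncClosed H (i + 1) := by
  obtain ⟨mul, comm, inv⟩ := h
  refine ⟨fun {a g h} hg hh => ⟨fun n => mul_mem (hg.1 n) (hh.1 n), ?_⟩,
    fun {a b c g h} hc hg hh =>
      ⟨fun n => gamma_antitone hc (comm'_mem_gamma (hg.1 n) (hh.1 n)), ?_⟩,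
    fun {a g} hg => ⟨fun n => inv_mem (hg.1 n), ?_⟩⟩
  · rw [mulDiff_mul]
    exact mul (mul hg.2 (comm (by omega) hg.2 (polyTrunc.of_succ hh))) hh.2
  · have hgh := comm le_rfl (polyTrunc.of_succ hg) (polyTrunc.of_succ hh)
    have h₁ := comm (c := a + b + 1) (by omega) (polyTrunc.of_succ hg) hh.2
    have h₂ := comm (c := a + b + 1) (by omega) h₁
      (mul (polyTrunc.anti (Nat.zero_le _) hg.2) (polyTrunc.anti (Nat.zero_le _) hgh))
    have h₃ := comm (b := 1) (c := a + b + 1) (by omega) hgh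
      (mul (polyTrunc.anti (by omega) hh.2) (polyTrunc.anti (by omega) hg.2))
    have h₄ := comm (c := a + b + 1) (by omega) hg.2
      (mul (polyTrunc.of_succ hh) (polyTrunc.anti (by omega) hh.2))
    rw [mulDiff_comm']
    exact polyTrunc.anti (Nat.succ_le_succ hc) (mul (mul (mul h₁ h₂) h₃) h₄)
  · rw [mulDiff_inv]
    exact mul (inv hg.2) (comm (by omega) (inv hg.2) (inv (polyTrunc.of_succ hg)))

theorem polyTruncClosed (i : ℕ) : PolyTruncClosed H i := by
  induction i with
  | zero => exact polyTruncClosed_zero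
  | succ i ih => exact ih.succ

/-- The polynomial sequences of weight `j`. -/
def poly (H : Type*) [Group H] (j : ℕ) : Subgroup (ℕ → H) where
  carrier := {g | ∀ i, g ∈ polyTrunc j i}
  mul_mem' hg hh i := (polyTruncClosed i).1 (hg i) (hh i)
  one_mem' _ := polyTrunc.one_mem
  inv_mem' hg i := (polyTruncClosed i).2.2 (hg i)

variable {j : ℕ} {g : ℕ → H}

theorem mulDiff_mem_poly (hg : g ∈ poly H j) : mulDiff g ∈ poly H (j + 1) :=
  fun i => (hg (i + 1)).2

theorem comp_mem_poly (f : H →* H') (hg : g ∈ poly H j) : f ∘ g ∈ poly H' j :=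
  fun i => polyTrunc.comp f (hg i)

theorem iterate_mulDiff_apply_mem_gamma (hg : g ∈ poly H j) (k n : ℕ) :
    mulDiff^[k] g n ∈ gamma H (j + k) := by
  induction k generalizing j g with
  | zero => exact polyTrunc.apply_mem (hg 0) n
  | succ k ih =>
    rw [Function.iterate_succ_apply, ← add_comm 1, ← add_assoc]
    exact ih (mulDiff_mem_poly hg)

theorem pow_choose_mem_poly {u : H} {e : ℕ} (hu : u ∈ gamma H (j + e)) :
    (fun n => u ^ n.choose e) ∈ poly H j := by
  intro i
  induction i generalizing j e with
  | zero => exact fun n => pow_mem (gamma_antitone (by omega) hu) _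
  | succ i ih =>
    refine ⟨fun n => pow_mem (gamma_antitone (by omega) hu) _, ?_⟩
    cases e with
    | zero =>
      have h : mulDiff (fun n => u ^ n.choose 0) = 1 := by funext n; simp [mulDiff]
      exact h ▸ polyTrunc.one_mem
    | succ e =>
      have h : mulDiff (fun n => u ^ n.choose (e + 1)) = fun n => u ^ n.choose e := by
        funext n
        simp only [mulDiff, Nat.choose_succ_succ', pow_add]
        group
      exact h ▸ ih (by rwa [add_right_comm, add_assoc])

theorem pow_mem_poly (u : H) : (fun n => u ^ n) ∈ poly H 0 := by
  simpa using pow_choose_mem_poly (j := 0) (e := 1) (Subgroup.mem_top u)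

end PolynomialSequences

section BinomialProducts

variable {H H' : Type*} [Group H] [Group H']

def binomialProd (u : ℕ → H) : ℕ → ℕ → H
  | 0, _ => 1
  | C + 1, n => binomialProd u C n * u (C + 1) ^ n.choose (C + 1)

variable {u v : ℕ → H} {C : ℕ}

theorem binomialProd_apply_zero : binomialProd u C 0 = 1 := by
  induction C with
  | zero => rfl
  | succ C ih => simp [binomialProd, ih]

theorem binomialProd_apply_one : binomialProd u (C + 1) 1 = u 1 := by
  induction C with
  | zero => simp [binomialProd]
  | succ C ih => rw [binomialProd, ih, Nat.choose_eq_zero_of_lt (by omega), pow_zero, mul_one]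

theorem binomialProd_congr (h : ∀ e ≤ C, u e = v e) (n : ℕ) :
    binomialProd u C n = binomialProd v C n := by
  induction C with
  | zero => rfl
  | succ C ih =>
    simp only [binomialProd, ih fun e he => h e (by omega), h (C + 1) le_rfl]

theorem map_binomialProd (f : H →* H') (n : ℕ) :
    f (binomialProd u C n) = binomialProd (f ∘ u) C n := by
  induction C with
  | zero => exact map_one f
  | succ C ih => simp [binomialProd, ih]

theorem binomialProd_eq_one {n : ℕ} (h : ∀ e, 1 ≤ e → e ≤ C → u e ^ n.choose e = 1) :
    binomialProd u C n = 1 := by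
  induction C with
  | zero => rfl
  | succ C ih =>
    rw [binomialProd, ih fun e he he' => h e he (by omega), h (C + 1) (by omega) le_rfl, mul_one]

theorem binomialProd_mem_center (hu : ∀ e, u e ∈ center H) (C n : ℕ) :
    binomialProd u C n ∈ center H := by
  induction C with
  | zero => exact Subgroup.one_mem _
  | succ C ih => exact mul_mem ih (pow_mem (hu _) _)

theorem binomialProd_mul_of_mem_center {z : ℕ → H} (hz : ∀ e, z e ∈ center H) (n : ℕ) :
    binomialProd (u * z) C n = binomialProd u C n * binomialProd z C n := by
  induction C with
  | zero => simp [binomialProd]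
  | succ C ih =>
    have hcomm : Commute (u (C + 1)) (z (C + 1)) := mem_center_iff.1 (hz _) _
    have hmove := mem_center_iff.1 (binomialProd_mem_center hz C n) (u (C + 1) ^ n.choose (C + 1))
    simp only [binomialProd, ih, Pi.mul_apply, hcomm.mul_pow, mul_assoc]
    rw [← mul_assoc (binomialProd z C n), ← hmove, mul_assoc]

theorem binomialProd_mem_poly (hu : ∀ e, u e ∈ gamma H e) (C : ℕ) :
    binomialProd u C ∈ poly H 0 := by
  induction C with
  | zero => exact Subgroup.one_mem _
  | succ C ih => exact mul_mem ih (pow_choose_mem_poly (by simpa using hu (C + 1)))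

end BinomialProducts

section Newton

variable {A : Type*} [CommGroup A]

theorem binomialProd_apply_succ (u : ℕ → A) (D n : ℕ) :
    binomialProd u (D + 1) (n + 1) =
      binomialProd u (D + 1) n * (u 1 * binomialProd (fun e => u (e + 1)) D n) := by
  induction D with
  | zero => simp [binomialProd, pow_succ]
  | succ D ih =>
    rw [binomialProd, ih, Nat.choose_succ_succ' n (D + 1), pow_add]
    simp only [binomialProd]
    ac_rfl

theorem eq_mul_binomialProd_of_iterate_mulDiff_eq_one {D : ℕ} {f : ℕ → A}
    (hf : mulDiff^[D + 1] f = 1) (n : ℕ) :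
    f n = f 0 * binomialProd (fun e => mulDiff^[e] f 0) D n := by
  induction D generalizing f n with
  | zero =>
    induction n with
    | zero => simp [binomialProd]
    | succ n ih =>
      have h : (f n)⁻¹ * f (n + 1) = 1 := congrFun hf n
      rw [← inv_mul_eq_one.1 h, ih]
      rfl
  | succ D ih =>
    have hΔ := ih (f := mulDiff f) (by rwa [← Function.iterate_succ_apply])
    induction n with
    | zero => simp [binomialProd_apply_zero]
    | succ n ihn =>
      have hstep : f (n + 1) = f n * mulDiff f n := by simp [mulDiff]
      rw [hstep, ihn, hΔ, binomialProd_apply_succ, mul_assoc]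
      rfl

end Newton

section Taylor

variable {H : Type*} [Group H]

open scoped IsMulCommutative

theorem exists_binomialProd_eq_of_mem_center {δ : ℕ → H} (hδ : δ ∈ poly H 0) (hδ0 : δ 0 = 1)
    (hcen : ∀ n, δ n ∈ center H) {D : ℕ} (hD : gamma H (D + 1) = ⊥) :
    ∃ a : ℕ → H, (∀ e, a e ∈ gamma H e ∧ a e ∈ center H) ∧ ∀ n, δ n = binomialProd a D n := by
  let δ' : ℕ → center H := fun n => ⟨δ n, hcen n⟩
  have hcoe (k n : ℕ) : ((mulDiff^[k] δ' n : center H) : H) = mulDiff^[k] δ n :=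
    congrFun (iterate_mulDiff_comp (center H).subtype k δ').symm n
  have hvan : mulDiff^[D + 1] δ' = 1 := by
    funext n
    have h := iterate_mulDiff_apply_mem_gamma hδ (D + 1) n
    rw [zero_add, hD, mem_bot, ← hcoe] at h
    exact Subtype.ext h
  refine ⟨fun e => mulDiff^[e] δ 0, fun e => ⟨?_, ?_⟩, fun n => ?_⟩
  · simpa using iterate_mulDiff_apply_mem_gamma hδ e 0
  · simpa only [hcoe] using (mulDiff^[e] δ' 0).2
  · have h := congrArg (center H).subtype (eq_mul_binomialProd_of_iterate_mulDiff_eq_one hvan n)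
    rw [map_mul, map_binomialProd] at h
    simp only [coe_subtype] at h
    rw [show δ n = δ' n from rfl, h, show (δ' 0 : H) = 1 from hδ0, one_mul]
    exact binomialProd_congr (fun e _ => hcoe e 0) n

theorem exists_binomialProd_succ_eq {C : ℕ} (hC : gamma H (C + 1 + 1) = ⊥) {g : ℕ → H}
    (hg : g ∈ poly H 0) (hg0 : g 0 = 1) {uQ : ℕ → H ⧸ gamma H (C + 1)}
    (huQ : ∀ e, uQ e ∈ gamma _ e) (hgQ : ∀ n, QuotientGroup.mk' _ (g n) = binomialProd uQ C n) :
    ∃ u : ℕ → H, (∀ e, u e ∈ gamma H e) ∧ ∀ n, g n = binomialProd u (C + 1) n := by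
  have hlift (e : ℕ) : ∃ v ∈ gamma H e, QuotientGroup.mk' (gamma H (C + 1)) v = uQ e := by
    rw [← mem_map, map_gamma (QuotientGroup.mk'_surjective _)]
    exact huQ e
  choose u' hu'γ hu'π using hlift
  set δ := (binomialProd u' C)⁻¹ * g
  have hδA (n : ℕ) : δ n ∈ gamma H (C + 1) := by
    rw [← QuotientGroup.ker_mk' (gamma H (C + 1)), MonoidHom.mem_ker]
    have hu' : QuotientGroup.mk' (gamma H (C + 1)) ∘ u' = uQ := funext hu'π
    simp only [δ, Pi.mul_apply, Pi.inv_apply, map_mul, map_inv, map_binomialProd, hu']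
    rw [hgQ n]
    exact inv_mul_cancel _
  have hAcen : gamma H (C + 1) ≤ center H := commutator_top_right_eq_bot_iff_le_center.1 hC
  -- `δ` is central, so Newton's forward-difference formula expands it
  obtain ⟨a, ha, hδa⟩ := exists_binomialProd_eq_of_mem_center (D := C + 1)
    (mul_mem (inv_mem (binomialProd_mem_poly hu'γ C)) hg)
    (by simp [binomialProd_apply_zero, hg0]) (fun n => hAcen (hδA n)) hC
  refine ⟨Function.update u' (C + 1) 1 * a, fun e => mul_mem ?_ (ha e).1, fun n => ?_⟩
  · rw [Function.update_apply]
    split_ifs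
    exacts [Subgroup.one_mem _, hu'γ e]
  have hupdate : binomialProd (Function.update u' (C + 1) 1) (C + 1) n = binomialProd u' C n := by
    rw [binomialProd, Function.update_self, one_pow, mul_one]
    refine binomialProd_congr (fun e he => ?_) n
    exact Function.update_of_ne (by omega) _ _
  calc g n = binomialProd u' C n * δ n := by simp [δ]
    _ = binomialProd (Function.update u' (C + 1) 1) (C + 1) n * binomialProd a (C + 1) n := by
      rw [hupdate, ← hδa n]
    _ = _ := (binomialProd_mul_of_mem_center (fun e => (ha e).2) n).symm

theorem exists_binomialProd_eq (C : ℕ) (hC : gamma H (C + 1) = ⊥) {g : ℕ → H}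
    (hg : g ∈ poly H 0) (hg0 : g 0 = 1) :
    ∃ u : ℕ → H, (∀ e, u e ∈ gamma H e) ∧ ∀ n, g n = binomialProd u C n := by
  induction C generalizing H g with
  | zero =>
    refine ⟨1, fun e => Subgroup.one_mem _, fun n => ?_⟩
    have h : g n ∈ gamma H 1 := mem_top _
    rwa [hC, mem_bot] at h
  | succ C ih =>
    have hπ := QuotientGroup.mk'_surjective (gamma H (C + 1))
    obtain ⟨uQ, huQ, hgQ⟩ := ih (H := H ⧸ gamma H (C + 1))
      (by rw [← map_gamma hπ, Subgroup.map_eq_bot_iff, QuotientGroup.ker_mk'])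
      (comp_mem_poly _ hg) (by simp [hg0])
    exact exists_binomialProd_succ_eq hC hg hg0 huQ hgQ

end Taylor

section RegularPower

theorem mul_pow_eq_of_lowerCentralSeries_eq_bot {H : Type*} [Group H] {p : ℕ} (hp : p.Prime)
    (hnil : (⊤ : Subgroup H).lowerCentralSeries (p - 1) = ⊥)
    (hexp : ∀ x ∈ (⊤ : Subgroup H).lowerCentralSeries 1, x ^ p = 1) (a b : H) :
    (a * b) ^ p = a ^ p * b ^ p := by
  let g : ℕ → H := fun n => ((a * b) ^ n)⁻¹ * (a ^ n * b ^ n)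
  have hg : g ∈ poly H 0 :=
    mul_mem (inv_mem (pow_mem_poly _)) (mul_mem (pow_mem_poly a) (pow_mem_poly b))
  obtain ⟨u, hu, hgu⟩ := exists_binomialProd_eq (p - 1) (by rwa [gamma, Nat.add_sub_cancel]) hg
    (by simp [g])
  have hu1 : u 1 = 1 := by
    obtain ⟨C, hC⟩ : ∃ C, p - 1 = C + 1 := ⟨p - 2, by have := hp.two_le; omega⟩
    rw [← binomialProd_apply_one (u := u) (C := C), ← hC, ← hgu 1]
    simp [g]
  -- for `2 ≤ e < p`, `u e ∈ γ₂(H)` has exponent `p`, and `p` divides `p.choose e`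
  have hgp : g p = 1 := by
    rw [hgu p]
    refine binomialProd_eq_one fun e he1 he => ?_
    rcases he1.eq_or_lt with rfl | he2
    · rw [hu1, one_pow]
    · obtain ⟨m, hm⟩ := hp.dvd_choose_self (by omega) (by omega : e < p)
      rw [hm, pow_mul, hexp _ (gamma_antitone he2 (hu e)), one_pow]
  exact inv_mul_eq_one.1 hgp

theorem Subgroup.mul_pow_eq_of_lowerCentralSeries_eq_bot {G : Type*} [Group G] (S : Subgroup G)
    {p : ℕ} (hp : p.Prime) (hnil : S.lowerCentralSeries (p - 1) = ⊥)
    (hexp : ∀ x ∈ S.lowerCentralSeries 1, x ^ p = 1) {a b : G} (ha : a ∈ S) (hb : b ∈ S) :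
    (a * b) ^ p = a ^ p * b ^ p := by
  have h := _root_.mul_pow_eq_of_lowerCentralSeries_eq_bot (H := S) hp ?_ ?_ ⟨a, ha⟩ ⟨b, hb⟩
  · exact congrArg Subtype.val h
  · rw [← (map_injective S.subtype_injective).eq_iff, top_subtype_lowerCentralSeries, map_bot,
      hnil]
  · intro x hx
    apply Subtype.ext
    simpa using hexp x (top_subtype_lowerCentralSeries S 1 ▸ mem_map_of_mem S.subtype hx)

end RegularPower

section Steps

variable {G : Type*} [Group G]

theorem commutator_closure_pair_le {M : Subgroup G} [M.Normal] {c y : G} (h : ⁅c, y⁆ ∈ M) :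
    ⁅closure {c, y}, closure {c, y}⁆ ≤ M := by
  rw [← QuotientGroup.ker_mk' M, ← Subgroup.map_eq_bot_iff, map_commutator, MonoidHom.map_closure,
    commutator_self_eq_bot_iff]
  have hcy : Commute (QuotientGroup.mk' M c) (QuotientGroup.mk' M y) := by
    rw [← commutatorElement_eq_one_iff_commute, ← map_commutatorElement, ← MonoidHom.mem_ker,
      QuotientGroup.ker_mk']
    exact h
  apply isMulCommutative_closure
  simp only [Set.image_insert_eq, Set.image_singleton, Set.mem_insert_iff, Set.mem_singleton_iff]
  rintro _ (rfl | rfl) _ (rfl | rfl)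
  exacts [rfl, hcy, hcy.symm, rfl]

theorem lowerCentralSeries_closure_pair_le {N : Subgroup G} [N.Normal] {c y : G}
    (hc : c ∈ ⁅N, (⊤ : Subgroup G)⁆) (hy : y ∈ N) (j : ℕ) :
    (closure {c, y}).lowerCentralSeries (j + 1) ≤ ⁅iterComm N (j + 1), N⁆ := by
  induction j with
  | zero => exact commutator_closure_pair_le (commutator_mem_commutator hc hy)
  | succ j ih =>
    have hS : closure {c, y} ≤ N := by
      rw [closure_le, Set.insert_subset_iff, Set.singleton_subset_iff]
      exact ⟨commutator_le_left N ⊤ hc, hy⟩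
    exact (commutator_mono ih hS).trans (commutator_mono (commutator_mono le_rfl le_top) le_rfl)

theorem mul_pow_prime_eq_pow {p : ℕ} (hp : p.Prime) (hp3 : 3 ≤ p) {N : Subgroup G} [N.Normal]
    (hN : iterComm N (p - 2) ≤ spow N p) (hexp : ∀ x ∈ ⁅N, (⊤ : Subgroup G)⁆, x ^ p = 1)
    (hcen : ⁅spow N p, (⊤ : Subgroup G)⁆ ≤ center G) {c y : G}
    (hc : c ∈ ⁅N, (⊤ : Subgroup G)⁆) (hy : y ∈ N) : (c * y) ^ p = y ^ p := by
  have hS := lowerCentralSeries_closure_pair_le hc hy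
  have hnil : (closure {c, y}).lowerCentralSeries (p - 1) = ⊥ := by
    obtain ⟨j, hj⟩ : ∃ j, p - 2 = j + 1 := ⟨p - 3, by omega⟩
    rw [show p - 1 = p - 2 + 1 by omega]
    refine Subgroup.lowerCentralSeries_succ_eq_bot _ ((hj ▸ hS j).trans ?_)
    exact (commutator_mono (hj ▸ hN) le_top).trans hcen
  have hexpS (x : G) (hx : x ∈ (closure {c, y}).lowerCentralSeries 1) : x ^ p = 1 :=
    hexp x (commutator_le_left _ N (hS 0 hx))
  rw [(closure {c, y}).mul_pow_eq_of_lowerCentralSeries_eq_bot hp hnil hexpS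
    (subset_closure (by simp)) (subset_closure (by simp)), hexp c hc, one_mul]

theorem mul_sq_of_commutator_mem_center {x y : G} (h : ⁅x, y⁆ ∈ center G) :
    (x * y) ^ 2 = ⁅x, y⁆⁻¹ * (x ^ 2 * y ^ 2) := by
  have hx : x * ⁅x, y⁆⁻¹ = ⁅x, y⁆⁻¹ * x := mem_center_iff.1 (inv_mem h) x
  calc (x * y) ^ 2 = x * ⁅x, y⁆⁻¹ * (x * y ^ 2) := by
        rw [commutatorElement_def, pow_two, pow_two]; group
    _ = ⁅x, y⁆⁻¹ * (x ^ 2 * y ^ 2) := by rw [hx, pow_two, pow_two]; group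

theorem commutator_sq_left_of_mem_center {x y : G} (h : ⁅x, y⁆ ∈ center G) :
    ⁅x ^ 2, y⁆ = ⁅x, y⁆ ^ 2 := by
  have hx : x * ⁅x, y⁆ = ⁅x, y⁆ * x := mem_center_iff.1 h x
  calc ⁅x ^ 2, y⁆ = x * ⁅x, y⁆ * (y * x⁻¹ * y⁻¹) := by
        rw [commutatorElement_def, commutatorElement_def, pow_two]; group
    _ = ⁅x, y⁆ * ⁅x, y⁆ := by rw [hx, commutatorElement_def x y]; group
    _ = ⁅x, y⁆ ^ 2 := (pow_two _).symm

theorem mul_pow_four_eq_pow {N : Subgroup G} (hN : ⁅N, (⊤ : Subgroup G)⁆ ≤ spow N 4)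
    (hexp : ∀ x ∈ ⁅N, (⊤ : Subgroup G)⁆, x ^ 4 = 1)
    (hcen : ∀ x ∈ ⁅spow N 4, (⊤ : Subgroup G)⁆, x ∈ center G ∧ x ^ 2 = 1) {c y : G}
    (hc : c ∈ ⁅N, (⊤ : Subgroup G)⁆) : (c * y) ^ 4 = y ^ 4 := by
  obtain ⟨h₁c, h₁⟩ := hcen ⁅c, y⁆ (commutator_mem_commutator (hN hc) (mem_top y))
  obtain ⟨h₂c, h₂⟩ := hcen ⁅c, y ^ 2⁆ (commutator_mem_commutator (hN hc) (mem_top _))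
  have hcomm : Commute (c ^ 2) (y ^ 2) := by
    rw [← commutatorElement_eq_one_iff_commute, commutator_sq_left_of_mem_center h₂c, h₂]
  have hz : Commute ⁅c, y⁆⁻¹ (c ^ 2 * y ^ 2) := (mem_center_iff.1 (inv_mem h₁c) _).symm
  calc (c * y) ^ 4 = ((c * y) ^ 2) ^ 2 := by rw [← pow_mul]
    _ = (⁅c, y⁆ ^ 2)⁻¹ * (c ^ 2 * y ^ 2) ^ 2 := by
      rw [mul_sq_of_commutator_mem_center h₁c, hz.mul_pow, inv_pow]
    _ = c ^ 4 * y ^ 4 := by rw [h₁, inv_one, one_mul, hcomm.mul_pow, ← pow_mul, ← pow_mul]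
    _ = y ^ 4 := by rw [hexp c hc, one_mul]

end Steps

section Main

universe u

theorem Subgroup.normal_of_le_center {G : Type*} [Group G] {H : Subgroup G} (h : H ≤ center G) :
    H.Normal where
  conj_mem n hn g := by rw [mem_center_iff.1 (h hn) g, mul_inv_cancel_right]; exact hn

theorem card_quotient_lt {G : Type*} [Group G] [Finite G] {W : Subgroup G} [W.Normal]
    (hW : W ≠ ⊥) : Nat.card (G ⧸ W) < Nat.card G := by
  rw [← W.index_eq_card, ← W.index_mul_card]
  exact lt_mul_of_one_lt_right (Nat.pos_of_ne_zero W.index_ne_zero_of_finite)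
    (W.one_lt_card_iff_ne_bot.2 hW)

theorem IsPGroup.exists_mem_center_ne_one_pow_eq_one {p : ℕ} {G : Type*} [Group G] [Finite G]
    [Nontrivial G] (hp : p.Prime) (hG : IsPGroup p G) :
    ∃ z ∈ center G, z ≠ 1 ∧ z ^ p = 1 := by
  have := Fact.mk hp
  obtain ⟨n, hn, hcard⟩ := (hG.to_subgroup (center G)).nontrivial_iff_card.1 hG.center_nontrivial
  obtain ⟨z, hz⟩ := exists_prime_orderOf_dvd_card' p (hcard ▸ dvd_pow_self p hn.ne')
  rw [← Subgroup.orderOf_coe] at hz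
  refine ⟨z, z.2, fun h => hp.one_lt.ne' ?_, hz ▸ pow_orderOf_eq_one (z : G)⟩
  rw [← hz, h, orderOf_one]

theorem commutator_spow_le_spow_commutator {p q e : ℕ} (hp : p.Prime)
    (step : ∀ (H : Type u) [Group H] (N : Subgroup H) [N.Normal], iterComm N e ≤ spow N q →
      (∀ x ∈ ⁅N, (⊤ : Subgroup H)⁆, x ^ q = 1) →
      (∀ x ∈ ⁅spow N q, (⊤ : Subgroup H)⁆, x ∈ center H ∧ x ^ p = 1) →
      ∀ c ∈ ⁅N, (⊤ : Subgroup H)⁆, ∀ y ∈ N, (c * y) ^ q = y ^ q)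
    {G : Type u} [Group G] [Finite G] (hG : IsPGroup p G) (N : Subgroup G) [N.Normal]
    (hN : iterComm N e ≤ spow N q) : ⁅spow N q, (⊤ : Subgroup G)⁆ ≤ spow ⁅N, ⊤⁆ q := by
  induction hcard : Nat.card G using Nat.strong_induction_on generalizing G with
  | _ n ih =>
  have hquot (W : Subgroup G) [W.Normal] (hW : W ≠ ⊥) :
      ⁅spow N q, (⊤ : Subgroup G)⁆ ≤ spow ⁅N, ⊤⁆ q ⊔ W := by
    have hπ := QuotientGroup.mk'_surjective W
    have h := ih _ (hcard ▸ card_quotient_lt hW) (hG.to_quotient W) (N.map (QuotientGroup.mk' W))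
      (by rw [← map_iterComm hπ, ← map_spow]; exact map_mono hN) rfl
    rwa [← map_top_of_surjective _ hπ, ← map_spow, ← map_commutator, ← map_commutator, ← map_spow,
      Subgroup.map_le_map_iff, QuotientGroup.ker_mk'] at h
  by_cases hM : spow ⁅N, (⊤ : Subgroup G)⁆ q = ⊥
  · rcases subsingleton_or_nontrivial G with hG1 | hG1
    · intro x _
      rw [Subsingleton.elim x 1]
      exact one_mem _
    obtain ⟨z, hzc, hz1, hzp⟩ := hG.exists_mem_center_ne_one_pow_eq_one hp
    have hZ : zpowers z ≤ center G := zpowers_le.2 hzc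
    have := normal_of_le_center hZ
    have hle := hquot (zpowers z) (zpowers_ne_bot.2 hz1)
    rw [hM, bot_sup_eq] at hle
    have hZp (x : G) (hx : x ∈ ⁅spow N q, (⊤ : Subgroup G)⁆) : x ∈ center G ∧ x ^ p = 1 := by
      obtain ⟨k, rfl⟩ := mem_zpowers_iff.1 (hle hx)
      refine ⟨zpow_mem hzc k, ?_⟩
      rw [← zpow_natCast, ← zpow_mul, mul_comm, zpow_mul, zpow_natCast, hzp, one_zpow]
    have hcen := spow_le_center_of_mul_pow_eq
      (step G N hN (fun x hx => pow_eq_one_of_spow_eq_bot hM hx) hZp)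
    rw [commutator_top_right_eq_bot_iff_le_center.2 hcen]
    exact bot_le
  · simpa using hquot _ hM

theorem lowerCentralSeries_add_le_spow {G : Type*} [Group G] {q e : ℕ}
    (h : ∀ N : Subgroup G, [N.Normal] → iterComm N e ≤ spow N q →
      ⁅spow N q, (⊤ : Subgroup G)⁆ ≤ spow ⁅N, ⊤⁆ q)
    (h₀ : (⊤ : Subgroup G).lowerCentralSeries e ≤ spow ⊤ q) (k : ℕ) :
    (⊤ : Subgroup G).lowerCentralSeries (e + k) ≤
      spow ((⊤ : Subgroup G).lowerCentralSeries k) q := by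
  induction k with
  | zero => exact h₀
  | succ k ih =>
    calc (⊤ : Subgroup G).lowerCentralSeries (e + (k + 1))
        = ⁅(⊤ : Subgroup G).lowerCentralSeries (e + k), ⊤⁆ := rfl
      _ ≤ ⁅spow ((⊤ : Subgroup G).lowerCentralSeries k) q, ⊤⁆ := commutator_mono ih le_rfl
      _ ≤ spow ((⊤ : Subgroup G).lowerCentralSeries (k + 1)) q :=
        h _ (by rw [iterComm_lowerCentralSeries, add_comm]; exact ih)

end Main

/-- **Lemma.** If `G` is a finite potent `p`-group then, for every `k ≥ 1`,
`γ_{k+1}(G) ≤ γ_k(G)^4` when `p = 2`, and `γ_{p-1+k}(G) ≤ γ_{k+1}(G)^p` when `p ≥ 3`.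
(Here `γ_j(G) = lowerCentralSeries G (j-1)`.) -/
theorem potent_lower_central_series (p : ℕ) (hp : p.Prime) (G : Type*) [Group G] [Finite G]
    (hG : IsPGroup p G) (hpot : IsPotent p G) (k : ℕ) (hk : 1 ≤ k) :
    (p = 2 → (⊤ : Subgroup G).lowerCentralSeries k ≤ spow ((⊤ : Subgroup G).lowerCentralSeries (k - 1)) 4) ∧
    (3 ≤ p → (⊤ : Subgroup G).lowerCentralSeries (p - 2 + k) ≤ spow ((⊤ : Subgroup G).lowerCentralSeries k) p) := by
  refine ⟨fun hp2 => ?_, fun hp3 => ?_⟩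
  · subst hp2
    obtain ⟨j, rfl⟩ : ∃ j, k = j + 1 := ⟨k - 1, by omega⟩
    rw [Nat.add_sub_cancel, add_comm]
    refine lowerCentralSeries_add_le_spow (fun N _ hN => ?_) (by simpa [IsPotent] using hpot) j
    exact commutator_spow_le_spow_commutator hp
      (fun _ _ _ _ hN hexp hcen c hc _ _ => mul_pow_four_eq_pow hN hexp hcen hc) hG N hN
  · refine lowerCentralSeries_add_le_spow (fun N _ hN => ?_)
      (by simpa [IsPotent, show p ≠ 2 by omega] using hpot) k
    exact commutator_spow_le_spow_commutator hp
      (fun _ _ _ _ hN hexp hcen _ hc _ hy => mul_pow_prime_eq_pow hp hp3 hN hexp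
        (fun x hx => (hcen x hx).1) hc hy) hG N hN
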